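/- arXiv:1403.3412 — 3 statements merged into one kernel-verified Lean document; each statement's English description precedes it below -/
import Mathlib

section
/- Let ρ₀ : ℂⁿ → ℝ be measurable and set Ω = {z ∈ ℂⁿ : ρ₀(z) < 0}. Let h : ℂ^m → [0,∞) be measurable and suppose there are constants c ≥ 0 and s > 0 such that λ({w ∈ ℂ^m : h(w) < t}) = c·t^s for every t > 0. Set Ω̃ = {(z,w) ∈ ℂⁿ × ℂ^m : ρ₀(z) + h(w) < 0}. Then for every measurable function u : ℂⁿ → ℂ and every real p with 0 < p < ∞, one has the identity in [0,∞]: ∫_{Ω̃} |u(z)|^p dλ(z,w) = c · ∫_Ω |u(z)|^p (−ρ₀(z))^s dλ(z). -/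
/-!
Over each `z`, the slice of `Ω̃` is the sublevel set `{w | h w < -ρ₀ z}`, of measure
`c (-ρ₀ z)^s` when `ρ₀ z < 0` and empty otherwise since `h ≥ 0`. Tonelli therefore turns the
integral over `Ω̃` into the integral of `|u|^p` against these slice measures.
-/

open MeasureTheory ENNReal

theorem preimage_prodMk_setOf_add_lt_zero {X Y : Type*} (ρ : X → ℝ) (h : Y → ℝ) (z : X) :
    Prod.mk z ⁻¹' {x : X × Y | ρ x.1 + h x.2 < 0} = {w | h w < -ρ z} := by
  ext w
  simp only [Set.mem_preimage, Set.mem_ofPred_eq]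
  constructor <;> intro _ <;> linarith

section

variable {X Y : Type*} [MeasurableSpace X] [MeasurableSpace Y] {μ : Measure X} {ν : Measure Y}

theorem setLIntegral_prod_comp_fst [SFinite ν] {S : Set (X × Y)} (hS : MeasurableSet S)
    {f : X → ℝ≥0∞} (hf : Measurable f) :
    ∫⁻ x in S, f x.1 ∂μ.prod ν = ∫⁻ z, f z * ν (Prod.mk z ⁻¹' S) ∂μ := by
  have hmeas : AEMeasurable (S.indicator fun x => f x.1) (μ.prod ν) :=
    ((hf.comp measurable_fst).indicator hS).aemeasurable
  rw [← lintegral_indicator hS, lintegral_prod _ hmeas]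
  congr 1 with z
  exact lintegral_indicator_const (measurable_prodMk_left hS) (f z)

theorem measure_setOf_lt_of_nonpos {h : Y → ℝ} (hh : ∀ w, 0 ≤ h w) {t : ℝ} (ht : t ≤ 0) :
    ν {w | h w < t} = 0 := by
  convert measure_empty (μ := ν)
  exact Set.eq_empty_of_forall_notMem fun w hw => (hw.trans_le ht).not_ge (hh w)

theorem setLIntegral_prod_add_lt_zero [SFinite ν] {ρ : X → ℝ} (hρ : Measurable ρ) {h : Y → ℝ}
    (hh : Measurable h) (hh_nonneg : ∀ w, 0 ≤ h w) {c s : ℝ}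
    (hvol : ∀ t : ℝ, 0 < t → ν {w | h w < t} = ENNReal.ofReal (c * t ^ s))
    {f : X → ℝ≥0∞} (hf : Measurable f) :
    ∫⁻ x in {x : X × Y | ρ x.1 + h x.2 < 0}, f x.1 ∂μ.prod ν =
      ENNReal.ofReal c * ∫⁻ z in {z | ρ z < 0}, f z * ENNReal.ofReal ((-ρ z) ^ s) ∂μ := by
  have hS : MeasurableSet {x : X × Y | ρ x.1 + h x.2 < 0} :=
    measurableSet_lt ((hρ.comp measurable_fst).add (hh.comp measurable_snd)) measurable_const
  have hΩ : MeasurableSet {z | ρ z < 0} := measurableSet_lt hρ measurable_const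
  have h_support : (fun z => f z * ν {w | h w < -ρ z}).support ⊆ {z | ρ z < 0} := by
    intro z hz
    by_contra hρz
    refine hz ?_
    dsimp only
    rw [measure_setOf_lt_of_nonpos hh_nonneg (by simpa using hρz), mul_zero]
  calc ∫⁻ x in {x : X × Y | ρ x.1 + h x.2 < 0}, f x.1 ∂μ.prod ν
      = ∫⁻ z, f z * ν {w | h w < -ρ z} ∂μ := by
        simp only [setLIntegral_prod_comp_fst hS hf, preimage_prodMk_setOf_add_lt_zero]
    _ = ∫⁻ z in {z | ρ z < 0}, f z * ν {w | h w < -ρ z} ∂μ :=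
        (setLIntegral_eq_of_support_subset h_support).symm
    _ = ∫⁻ z in {z | ρ z < 0}, ENNReal.ofReal c * (f z * ENNReal.ofReal ((-ρ z) ^ s)) ∂μ :=
        setLIntegral_congr_fun hΩ fun z hz => by
          have hpos : 0 < -ρ z := neg_pos.2 hz
          rw [hvol _ hpos, ofReal_mul' (Real.rpow_nonneg hpos.le s)]
          ring
    _ = _ := lintegral_const_mul' _ _ ofReal_ne_top

end

theorem stmt_3_general (n m : ℕ) (ρ₀ : (Fin n → ℂ) → ℝ) (hρ₀ : Measurable ρ₀)
    (h : (Fin m → ℂ) → ℝ) (hh_meas : Measurable h) (hh_nonneg : ∀ w, 0 ≤ h w)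
    (c s : ℝ)
    (hvol : ∀ t : ℝ, 0 < t →
      volume {w : Fin m → ℂ | h w < t} = ENNReal.ofReal (c * t ^ s))
    (u : (Fin n → ℂ) → ℂ) (hu : Measurable u) (p : ℝ) :
    ∫⁻ x in {x : (Fin n → ℂ) × (Fin m → ℂ) | ρ₀ x.1 + h x.2 < 0},
        ENNReal.ofReal (‖u x.1‖ ^ p) =
      ENNReal.ofReal c *
        ∫⁻ z in {z : Fin n → ℂ | ρ₀ z < 0},
          ENNReal.ofReal (‖u z‖ ^ p * (-ρ₀ z) ^ s) := by
  have hf : Measurable fun z => ENNReal.ofReal (‖u z‖ ^ p) := by fun_prop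
  simp only [Measure.volume_eq_prod, setLIntegral_prod_add_lt_zero hρ₀ hh_meas hh_nonneg hvol hf,
    ofReal_mul (Real.rpow_nonneg (norm_nonneg _) p)]

/-- Fubini-type identity: if `λ({h < t}) = c·t^s` for all `t > 0`, then for
`Ω̃ = {(z,w) : ρ₀ z + h w < 0}` and any measurable `u` and `0 < p < ∞`,
`∫_{Ω̃} |u(z)|^p dλ(z,w) = c · ∫_Ω |u(z)|^p (−ρ₀ z)^s dλ(z)` as an identity in `[0,∞]`. -/
theorem stmt_3 (n m : ℕ) (ρ₀ : (Fin n → ℂ) → ℝ) (hρ₀ : Measurable ρ₀)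
    (h : (Fin m → ℂ) → ℝ) (hh_meas : Measurable h) (hh_nonneg : ∀ w, 0 ≤ h w)
    (c s : ℝ) (hc : 0 ≤ c) (hs : 0 < s)
    (hvol : ∀ t : ℝ, 0 < t →
      volume {w : Fin m → ℂ | h w < t} = ENNReal.ofReal (c * t ^ s))
    (u : (Fin n → ℂ) → ℂ) (hu : Measurable u) (p : ℝ) (hp : 0 < p) :
    ∫⁻ x in {x : (Fin n → ℂ) × (Fin m → ℂ) | ρ₀ x.1 + h x.2 < 0},
        ENNReal.ofReal (‖u x.1‖ ^ p) =
      ENNReal.ofReal c *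
        ∫⁻ z in {z : Fin n → ℂ | ρ₀ z < 0},
          ENNReal.ofReal (‖u z‖ ^ p * (-ρ₀ z) ^ s) :=
  stmt_3_general n m ρ₀ hρ₀ h hh_meas hh_nonneg c s hvol u hu p
end

section
/- Let D ⊂ ℂ^m be a nonempty bounded open set which is complete Reinhardt, i.e. whenever w ∈ D and v ∈ ℂ^m satisfies |v_i| ≤ |w_i| for all i = 1, …, m, then v ∈ D. If u : D → ℂ is holomorphic and Lebesgue integrable on D, then ∫_D u dλ = u(0) · λ(D). -/
/-!
Rotating all coordinates by a common phase `e^{iθ}` preserves Lebesgue measure and maps a complete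
Reinhardt set onto itself, so `∫_D u(e^{iθ} w) dλ(w) = ∫_D u dλ` for every `θ`. Averaging over
`θ ∈ [0, 2π]` and exchanging the integrals by Fubini, the inner integral becomes the mean of the
holomorphic function `z ↦ u(z w)` over the unit circle, which is `u(0)` since the closed unit disc
`{z w : |z| ≤ 1}` lies in `D`.
-/

open MeasureTheory Complex Metric Set
open scoped Real

def IsCompleteReinhardt {ι : Type*} (D : Set (ι → ℂ)) : Prop :=
  ∀ w ∈ D, ∀ v : ι → ℂ, (∀ i, ‖v i‖ ≤ ‖w i‖) → v ∈ D

section CompleteReinhardt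

variable {ι E : Type*} [NormedAddCommGroup E]

noncomputable def rotatePi (c : Circle) : (ι → ℂ) ≃ᵐ (ι → ℂ) :=
  MeasurableEquiv.piCongrRight fun _ => (rotation c).toMeasurableEquiv

lemma rotatePi_apply (c : Circle) (w : ι → ℂ) : rotatePi c w = (c : ℂ) • w := rfl

lemma continuous_rotatePi_exp :
    Continuous fun p : ℝ × (ι → ℂ) => rotatePi (Circle.exp p.1) p.2 := by
  simp only [rotatePi_apply]
  fun_prop

variable {D : Set (ι → ℂ)}

lemma IsCompleteReinhardt.smul_mem (hD : IsCompleteReinhardt D) {w : ι → ℂ} (hw : w ∈ D) {z : ℂ}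
    (hz : ‖z‖ ≤ 1) : z • w ∈ D :=
  hD w hw _ fun i => by
    simpa only [Pi.smul_apply, smul_eq_mul, norm_mul] using
      mul_le_of_le_one_left (norm_nonneg _) hz

lemma IsCompleteReinhardt.preimage_rotatePi (hD : IsCompleteReinhardt D) (c : Circle) :
    rotatePi c ⁻¹' D = D := by
  ext w
  refine ⟨fun hw => ?_, fun hw => hD.smul_mem hw (Circle.norm_coe c).le⟩
  have hcw := hD.smul_mem hw (z := (c⁻¹ : Circle)) (Circle.norm_coe _).le
  rwa [rotatePi_apply, smul_smul, ← Circle.coe_mul, inv_mul_cancel, Circle.coe_one,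
    one_smul] at hcw

variable [Fintype ι]

lemma measurePreserving_rotatePi (c : Circle) :
    MeasurePreserving (rotatePi c : (ι → ℂ) → (ι → ℂ)) :=
  volume_preserving_pi fun _ => (rotation c).measurePreserving

lemma IsCompleteReinhardt.setIntegral_comp_rotatePi [NormedSpace ℝ E]
    (hD : IsCompleteReinhardt D) (c : Circle) (g : (ι → ℂ) → E) :
    ∫ w in D, g (rotatePi c w) = ∫ w in D, g w := by
  have h := (measurePreserving_rotatePi c).setIntegral_preimage_emb
    (rotatePi c).measurableEmbedding g D
  rwa [hD.preimage_rotatePi] at h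

lemma IsCompleteReinhardt.integrableOn_comp_rotatePi (hD : IsCompleteReinhardt D) (c : Circle)
    {g : (ι → ℂ) → E} (hg : IntegrableOn g D) : IntegrableOn (fun w => g (rotatePi c w)) D := by
  have h := ((measurePreserving_rotatePi c).integrableOn_comp_preimage
    (rotatePi c).measurableEmbedding (f := g) (s := D)).mpr hg
  rwa [hD.preimage_rotatePi] at h

lemma IsCompleteReinhardt.integrable_comp_rotatePi_exp_prod
    (hD : IsCompleteReinhardt D) (hDm : MeasurableSet D) {μ : Measure ℝ} [IsFiniteMeasure μ]
    {g : (ι → ℂ) → E} (hg : IntegrableOn g D) (hgc : ContinuousOn g D) :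
    Integrable (fun p : ℝ × (ι → ℂ) => g (rotatePi (Circle.exp p.1) p.2))
      (μ.prod (volume.restrict D)) := by
  have hcont : ContinuousOn (fun p : ℝ × (ι → ℂ) => g (rotatePi (Circle.exp p.1) p.2))
      (univ ×ˢ D) :=
    hgc.comp continuous_rotatePi_exp.continuousOn fun p hp => by
      have hp2 := hp.2
      rwa [← hD.preimage_rotatePi (Circle.exp p.1)] at hp2
  have hmeas : AEStronglyMeasurable (fun p : ℝ × (ι → ℂ) => g (rotatePi (Circle.exp p.1) p.2))
      (μ.prod (volume.restrict D)) := by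
    rw [← μ.restrict_univ, Measure.prod_restrict]
    exact hcont.aestronglyMeasurable (MeasurableSet.univ.prod hDm)
  have hnorm : (fun θ : ℝ => ∫ w in D, ‖g (rotatePi (Circle.exp θ) w)‖) =
      fun _ => ∫ w in D, ‖g w‖ :=
    funext fun θ => hD.setIntegral_comp_rotatePi _ fun w => ‖g w‖
  refine (integrable_prod_iff hmeas).mpr ⟨ae_of_all _ fun θ => ?_, ?_⟩
  · exact hD.integrableOn_comp_rotatePi (Circle.exp θ) hg
  · rw [hnorm]
    exact integrable_const _

lemma IsCompleteReinhardt.intervalIntegral_comp_rotatePi_exp [NormedSpace ℂ E] [CompleteSpace E]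
    (hD : IsCompleteReinhardt D) (hDo : IsOpen D) {u : (ι → ℂ) → E}
    (hu : DifferentiableOn ℂ u D) {w : ι → ℂ} (hw : w ∈ D) :
    ∫ θ in (0 : ℝ)..2 * π, u (rotatePi (Circle.exp θ) w) = (2 * π) • u 0 := by
  have hslice : DiffContOnCl ℂ (fun z : ℂ => u (z • w)) (ball 0 |1|) := by
    refine DifferentiableOn.diffContOnCl fun z hz => ?_
    rw [abs_one, closure_ball _ one_ne_zero, mem_closedBall_zero_iff] at hz
    have hzw := hD.smul_mem hw hz
    exact ((hu.differentiableAt (hDo.mem_nhds hzw)).comp z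
      (differentiableAt_id.smul_const w)).differentiableWithinAt
  have hmean := hslice.circleAverage
  rw [Real.circleAverage_def, zero_smul, inv_smul_eq_iff₀ (by positivity)] at hmean
  simpa only [rotatePi_apply, Circle.coe_exp, circleMap_zero, ofReal_one, one_mul] using hmean

end CompleteReinhardt

theorem stmt_5_general (m : ℕ) (D : Set (Fin m → ℂ))
    (hD_open : IsOpen D)
    (hD_reinhardt : ∀ w ∈ D, ∀ v : Fin m → ℂ,
      (∀ i, ‖v i‖ ≤ ‖w i‖) → v ∈ D)
    (u : (Fin m → ℂ) → ℂ)
    (hu_hol : DifferentiableOn ℂ u D)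
    (hu_int : IntegrableOn u D) :
    ∫ w in D, u w = (volume D).toReal • u 0 := by
  have hD : IsCompleteReinhardt D := hD_reinhardt
  have h2π : (0 : ℝ) < 2 * π := by positivity
  have hswap := integral_integral_swap (f := fun θ w => u (rotatePi (Circle.exp θ) w))
    (hD.integrable_comp_rotatePi_exp_prod hD_open.measurableSet
      (μ := volume.restrict (Ioc 0 (2 * π))) hu_int hu_hol.continuousOn)
  simp only [hD.setIntegral_comp_rotatePi] at hswap
  have hinner : ∀ w ∈ D, ∫ θ in Ioc 0 (2 * π), u (rotatePi (Circle.exp θ) w) = (2 * π) • u 0 :=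
    fun w hw => by
      rw [← intervalIntegral.integral_of_le h2π.le,
        hD.intervalIntegral_comp_rotatePi_exp hD_open hu_hol hw]
  rw [setIntegral_congr_fun hD_open.measurableSet hinner] at hswap
  rw [setIntegral_const, setIntegral_const, measureReal_def, measureReal_def, Real.volume_Ioc,
    sub_zero, ENNReal.toReal_ofReal h2π.le, smul_comm] at hswap
  exact smul_right_injective ℂ h2π.ne' hswap

/-- Mean value property over a bounded complete Reinhardt domain `D ⊆ ℂ^m`:
if `u` is holomorphic and integrable on `D`, then `∫_D u dλ = u(0)·λ(D)`. -/
theorem stmt_5 (m : ℕ) (D : Set (Fin m → ℂ)) (hD_ne : D.Nonempty)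
    (hD_open : IsOpen D) (hD_bdd : Bornology.IsBounded D)
    (hD_reinhardt : ∀ w ∈ D, ∀ v : Fin m → ℂ,
      (∀ i, ‖v i‖ ≤ ‖w i‖) → v ∈ D)
    (u : (Fin m → ℂ) → ℂ)
    (hu_hol : DifferentiableOn ℂ u D)
    (hu_int : IntegrableOn u D) :
    ∫ w in D, u w = (volume D).toReal • u 0 :=
  stmt_5_general m D hD_open hD_reinhardt u hu_hol hu_int
end

section
/- Let ρ₀ : ℂⁿ → ℝ be continuous, Ω = {z ∈ ℂⁿ : ρ₀(z) < 0}, let q and m be positive integers, and Ω̃ = {(z,w) ∈ ℂⁿ × ℂ^m : ρ₀(z) + |w|^{2q} < 0}. Let v : Ω̃ → ℂ be measurable and such that for every z ∈ Ω the function w ↦ v(z,w) is holomorphic on the ball {w ∈ ℂ^m : |w|^{2q} < −ρ₀(z)}, and let g : Ω → ℂ be measurable. Assume that (z,w) ↦ v(z,w)·conj(g(z)) is Lebesgue integrable on Ω̃. Then z ↦ v(z,0)·conj(g(z))·(−ρ₀(z))^{m/q} is Lebesgue integrable on Ω and λ(B_{ℂ^m}(0,1)) · ∫_Ω v(z,0)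 · conj(g(z)) · (−ρ₀(z))^{m/q} dλ(z) = ∫_{Ω̃} v(z,w) · conj(g(z)) dλ(z,w). -/
/-!
By Fubini, the integral over `Ω'` is the integral over `Ω` of the integrals over the fibres
`{w : |w|^{2q} < -ρ₀ z}`. These are balanced sets, and on a balanced set `B` a holomorphic `f`
satisfies `∫_B f = μ(B) f(0)` for every rotation-invariant `μ`: by rotation invariance,
`∫_B f` is also the integral over `B` of the circle averages `θ ↦ f(e^{iθ} w)`, and each of
these equals `f(0)` by the one-variable mean value property on the disc `{ζ w : |ζ| ≤ 1} ⊆ B`.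
The fibre over `z` is the unit ball scaled by `(-ρ₀ z)^{1/(2q)}`, so its volume is
`(-ρ₀ z)^{m/q}` times that of the unit ball.
-/

open MeasureTheory Set Pointwise

section MeanValue

variable {E F : Type*} [NormedAddCommGroup E] [NormedSpace ℂ E]
  [NormedAddCommGroup F] [NormedSpace ℂ F] [CompleteSpace F]

theorem integral_circleMap_smul_eq_of_balanced {B : Set E} (hB : Balanced ℂ B) {f : E → F}
    (hf : DifferentiableOn ℂ f B) {w : E} (hw : w ∈ B) :
    ∫ θ in Ioc 0 (2 * Real.pi), f (circleMap 0 1 θ • w) = (2 * Real.pi) • f 0 := by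
  have hdisc : DiffContOnCl ℂ (fun ζ : ℂ => f (ζ • w)) (Metric.ball 0 |1|) := by
    refine DifferentiableOn.diffContOnCl ?_
    rw [closure_ball _ (by norm_num)]
    refine hf.comp (differentiable_id.smul_const w).differentiableOn fun ζ hζ => ?_
    exact balanced_iff_smul_mem.1 hB (by simpa using hζ) hw
  have hmean := hdisc.circleAverage
  rw [Real.circleAverage_def, zero_smul, intervalIntegral.integral_of_le Real.two_pi_pos.le]
    at hmean
  rw [← hmean, smul_inv_smul₀ Real.two_pi_pos.ne']

theorem MeasureTheory.MeasurePreserving.restrict_balanced [MeasurableSpace E] {μ : Measure E}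
    {c : ℂ} (hμ : MeasurePreserving (c • ·) μ μ) (hc : ‖c‖ = 1) {B : Set E} (hBm : MeasurableSet B)
    (hB : Balanced ℂ B) :
    MeasurePreserving (c • ·) (μ.restrict B) (μ.restrict B) := by
  have hpre : (c • ·) ⁻¹' B = B := by
    ext w
    exact hB.smul_mem_iff (a := c) (b := 1) (by simp [hc]) |>.trans (by rw [one_smul])
  simpa [hpre] using hμ.restrict_preimage hBm

theorem setIntegral_eq_measureReal_smul_apply_zero_of_balanced [MeasurableSpace E]
    [BorelSpace E] [SecondCountableTopology E] {μ : Measure E} [SFinite μ]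
    (hμ : ∀ c : ℂ, ‖c‖ = 1 → MeasurePreserving (c • ·) μ μ)
    {B : Set E} (hBm : MeasurableSet B) (hB : Balanced ℂ B) {f : E → F}
    (hf : DifferentiableOn ℂ f B) (hfi : IntegrableOn f B μ) :
    ∫ w in B, f w ∂μ = μ.real B • f 0 := by
  set ν : Measure ℝ := volume.restrict (Ioc 0 (2 * Real.pi))
  have hrot : ∀ θ, MeasurePreserving (circleMap 0 1 θ • ·) (μ.restrict B) (μ.restrict B) :=
    fun θ => (hμ _ (by simp)).restrict_balanced (by simp) hBm hB
  have hskew : MeasurePreserving (fun p : ℝ × E => (p.1, circleMap 0 1 p.1 • p.2))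
      (ν.prod (μ.restrict B)) (ν.prod (μ.restrict B)) :=
    (MeasurePreserving.id ν).skew_product (by fun_prop) (ae_of_all _ fun θ => (hrot θ).map_eq)
  have hint : Integrable (Function.uncurry fun θ w => f (circleMap 0 1 θ • w))
      (ν.prod (μ.restrict B)) :=
    hskew.integrable_comp_of_integrable (g := fun p : ℝ × E => f p.2) (hfi.comp_snd ν)
  have hswap := integral_integral_swap hint
  have hrotInt : ∀ θ, ∫ w in B, f (circleMap 0 1 θ • w) ∂μ = ∫ w in B, f w ∂μ :=
    fun θ => (hrot θ).integral_comp' (f := MeasurableEquiv.smul₀ _ (by simp)) f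
  rw [integral_congr_ae (ae_of_all _ hrotInt), integral_const, measureReal_restrict_apply_univ,
    Real.volume_real_Ioc_of_le Real.two_pi_pos.le, sub_zero,
    setIntegral_congr_fun hBm fun w hw => integral_circleMap_smul_eq_of_balanced hB hf hw,
    integral_const, measureReal_restrict_apply_univ, smul_comm] at hswap
  exact smul_right_injective F Real.two_pi_pos.ne' hswap

end MeanValue

theorem integrable_and_setIntegral_prod_eq {α β E : Type*} [MeasurableSpace α]
    [MeasurableSpace β] [NormedAddCommGroup E] [NormedSpace ℝ E] {μ : Measure α}
    {ν : Measure β} [SFinite μ] [SFinite ν] {S : Set (α × β)} (hS : MeasurableSet S) {F : α × β → E}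
    (hF : IntegrableOn F S (μ.prod ν)) {G : α → E}
    (hG : ∀ᵐ x ∂μ, IntegrableOn (fun y => F (x, y)) (Prod.mk x ⁻¹' S) ν →
      ∫ y in Prod.mk x ⁻¹' S, F (x, y) ∂ν = G x) :
    Integrable G μ ∧ ∫ p in S, F p ∂(μ.prod ν) = ∫ x, G x ∂μ := by
  have hH : Integrable (S.indicator F) (μ.prod ν) := (integrable_indicator_iff hS).2 hF
  have hslice : ∀ x, (fun y => S.indicator F (x, y)) =
      (Prod.mk x ⁻¹' S).indicator (fun y => F (x, y)) :=
    fun x => funext fun _ => indicator_comp_right (Prod.mk x)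
  have hfiber : ∀ᵐ x ∂μ, ∫ y, S.indicator F (x, y) ∂ν = G x := by
    filter_upwards [hH.prod_right_ae, hG] with x hx hGx
    rw [hslice, integrable_indicator_iff (measurable_prodMk_left hS)] at hx
    rw [hslice, integral_indicator (measurable_prodMk_left hS), hGx hx]
  refine ⟨hH.integral_prod_left.congr hfiber, ?_⟩
  rw [← integral_indicator hS, integral_prod _ hH]
  exact integral_congr_ae hfiber

section SumNormSq

variable {ι : Type*} [Fintype ι]

theorem sum_norm_sq_smul {𝕜 V : Type*} [NormedField 𝕜] [SeminormedAddCommGroup V]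
    [NormedSpace 𝕜 V] (c : 𝕜) (w : ι → V) :
    ∑ i, ‖(c • w) i‖ ^ 2 = ‖c‖ ^ 2 * ∑ i, ‖w i‖ ^ 2 := by
  simp only [Pi.smul_apply, norm_smul, mul_pow, Finset.mul_sum]

theorem balanced_setOf_sum_norm_sq_pow_lt {𝕜 V : Type*} [NormedField 𝕜]
    [SeminormedAddCommGroup V] [NormedSpace 𝕜 V] (q : ℕ) (t : ℝ) :
    Balanced 𝕜 {w : ι → V | (∑ i, ‖w i‖ ^ 2) ^ q < t} := by
  refine balanced_iff_smul_mem.2 fun a ha w (hw : _ < t) => lt_of_le_of_lt ?_ hw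
  rw [sum_norm_sq_smul]
  have hQ : 0 ≤ ∑ i, ‖w i‖ ^ 2 := by positivity
  gcongr
  exact mul_le_of_le_one_left hQ (pow_le_one₀ (norm_nonneg a) ha)

theorem isBounded_setOf_sum_norm_sq_lt {V : Type*} [SeminormedAddCommGroup V] (r : ℝ) :
    Bornology.IsBounded {w : ι → V | ∑ i, ‖w i‖ ^ 2 < r} := by
  refine (Metric.isBounded_closedBall (x := 0) (r := √r)).subset fun w hw => ?_
  rw [mem_closedBall_zero_iff, pi_norm_le_iff_of_nonneg (Real.sqrt_nonneg r)]
  intro i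
  refine Real.le_sqrt_of_sq_le (le_trans ?_ (le_of_lt hw))
  exact Finset.single_le_sum (f := fun j => ‖w j‖ ^ 2) (fun j _ => by positivity)
    (Finset.mem_univ i)

theorem setOf_sum_norm_sq_pow_lt_eq_smul {V : Type*} [SeminormedAddCommGroup V]
    [NormedSpace ℝ V] {q : ℕ} (hq : q ≠ 0) {t : ℝ} (ht : 0 < t) :
    {w : ι → V | (∑ i, ‖w i‖ ^ 2) ^ q < t} =
      t ^ ((2 * q : ℕ)⁻¹ : ℝ) • {w : ι → V | ∑ i, ‖w i‖ ^ 2 < 1} := by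
  set r := t ^ ((2 * q : ℕ)⁻¹ : ℝ)
  have hr : 0 < r := by positivity
  have hrq : (r ^ 2) ^ q = t := by
    rw [← pow_mul, Real.rpow_inv_natCast_pow ht.le (by positivity)]
  ext w
  rw [mem_smul_set_iff_inv_smul_mem₀ hr.ne', mem_ofPred_eq, mem_ofPred_eq, sum_norm_sq_smul,
    norm_inv, Real.norm_of_nonneg hr.le, inv_pow, inv_mul_lt_iff₀ (by positivity), mul_one,
    ← hrq, pow_lt_pow_iff_left₀ (by positivity) (by positivity) hq]

theorem setOf_sum_norm_sq_pow_lt_eq_empty {V : Type*} [SeminormedAddCommGroup V] (q : ℕ)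
    {t : ℝ} (ht : t ≤ 0) : {w : ι → V | (∑ i, ‖w i‖ ^ 2) ^ q < t} = ∅ :=
  eq_empty_of_forall_notMem fun w (hw : (∑ i, ‖w i‖ ^ 2) ^ q < t) =>
    (lt_of_le_of_lt (by positivity) hw).not_ge ht

theorem volume_setOf_sum_norm_sq_pow_lt {q : ℕ} (hq : q ≠ 0) {t : ℝ} (ht : 0 < t) :
    volume {w : ι → ℂ | (∑ i, ‖w i‖ ^ 2) ^ q < t} =
      ENNReal.ofReal (t ^ (Fintype.card ι / q : ℝ)) *
        volume {w : ι → ℂ | ∑ i, ‖w i‖ ^ 2 < 1} := by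
  rw [setOf_sum_norm_sq_pow_lt_eq_smul hq ht, Measure.addHaar_smul, Module.finrank_pi_fintype]
  simp only [Complex.finrank_real_complex, Finset.sum_const, Finset.card_univ, smul_eq_mul]
  rw [abs_of_nonneg (by positivity), ← Real.rpow_natCast, ← Real.rpow_mul ht.le]
  congr 3
  push_cast
  field_simp

theorem volume_preserving_smul_of_norm_eq_one {c : ℂ} (hc : ‖c‖ = 1) :
    MeasurePreserving (c • ·) (volume : Measure (ι → ℂ)) volume :=
  volume_preserving_pi fun _ => (rotation ⟨c, mem_sphere_zero_iff_norm.2 hc⟩).measurePreserving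

theorem setIntegral_setOf_sum_norm_sq_pow_lt {F : Type*} [NormedAddCommGroup F]
    [NormedSpace ℂ F] [CompleteSpace F] {q : ℕ} (hq : q ≠ 0) {t : ℝ} (ht : 0 < t)
    {f : (ι → ℂ) → F} (hf : DifferentiableOn ℂ f {w | (∑ i, ‖w i‖ ^ 2) ^ q < t})
    (hfi : IntegrableOn f {w | (∑ i, ‖w i‖ ^ 2) ^ q < t}) :
    ∫ w in {w | (∑ i, ‖w i‖ ^ 2) ^ q < t}, f w =
      (t ^ (Fintype.card ι / q : ℝ) * volume.real {w : ι → ℂ | ∑ i, ‖w i‖ ^ 2 < 1}) •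
        f 0 := by
  have hB : Balanced ℂ {w : ι → ℂ | (∑ i, ‖w i‖ ^ 2) ^ q < t} :=
    balanced_setOf_sum_norm_sq_pow_lt q t
  have hm : MeasurableSet {w : ι → ℂ | (∑ i, ‖w i‖ ^ 2) ^ q < t} :=
    measurableSet_lt (by fun_prop) measurable_const
  rw [setIntegral_eq_measureReal_smul_apply_zero_of_balanced
      (fun _ hc => volume_preserving_smul_of_norm_eq_one hc) hm hB hf hfi,
    measureReal_def, volume_setOf_sum_norm_sq_pow_lt hq ht, ENNReal.toReal_mul,
    ENNReal.toReal_ofReal (by positivity), measureReal_def]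

theorem measureReal_setOf_sum_norm_sq_lt_one_pos :
    0 < volume.real {w : ι → ℂ | ∑ i, ‖w i‖ ^ 2 < 1} :=
  ENNReal.toReal_pos
    ((isOpen_lt (by fun_prop) continuous_const).measure_ne_zero _ ⟨0, by simp⟩)
    (isBounded_setOf_sum_norm_sq_lt 1).measure_lt_top.ne

end SumNormSq

theorem stmt_9_general (n m q : ℕ) (hq : 0 < q)
    (ρ₀ : (Fin n → ℂ) → ℝ) (hρ₀ : Continuous ρ₀)
    (v : (Fin n → ℂ) × (Fin m → ℂ) → ℂ)
    (hv_hol : ∀ z ∈ {z : Fin n → ℂ | ρ₀ z < 0},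
      DifferentiableOn ℂ (fun w => v (z, w))
        {w : Fin m → ℂ | (∑ i, ‖w i‖ ^ 2) ^ q < -ρ₀ z})
    (g : (Fin n → ℂ) → ℂ)
    (hint : IntegrableOn (fun x => v x * (starRingEnd ℂ) (g x.1))
      {x : (Fin n → ℂ) × (Fin m → ℂ) | ρ₀ x.1 + (∑ i, ‖x.2 i‖ ^ 2) ^ q < 0}) :
    IntegrableOn
      (fun z => v (z, 0) * (starRingEnd ℂ) (g z) * (((-ρ₀ z) ^ ((m : ℝ) / (q : ℝ)) : ℝ) : ℂ))
      {z : Fin n → ℂ | ρ₀ z < 0} ∧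
    (volume {w : Fin m → ℂ | ∑ i, ‖w i‖ ^ 2 < 1}).toReal •
        ∫ z in {z : Fin n → ℂ | ρ₀ z < 0},
          v (z, 0) * (starRingEnd ℂ) (g z) * (((-ρ₀ z) ^ ((m : ℝ) / (q : ℝ)) : ℝ) : ℂ) =
      ∫ x in {x : (Fin n → ℂ) × (Fin m → ℂ) | ρ₀ x.1 + (∑ i, ‖x.2 i‖ ^ 2) ^ q < 0},
        v x * (starRingEnd ℂ) (g x.1) := by
  set Ω := {z : Fin n → ℂ | ρ₀ z < 0}
  set Ω' := {x : (Fin n → ℂ) × (Fin m → ℂ) | ρ₀ x.1 + (∑ i, ‖x.2 i‖ ^ 2) ^ q < 0}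
  set T := fun z => v (z, 0) * (starRingEnd ℂ) (g z) * (((-ρ₀ z) ^ ((m : ℝ) / (q : ℝ)) : ℝ) : ℂ)
  set vol₁ := volume.real {w : Fin m → ℂ | ∑ i, ‖w i‖ ^ 2 < 1}
  have hΩ : MeasurableSet Ω := measurableSet_lt hρ₀.measurable measurable_const
  have hfiber : ∀ z, Prod.mk z ⁻¹' Ω' = {w | (∑ i, ‖w i‖ ^ 2) ^ q < -ρ₀ z} := by
    intro z; ext w; simp only [Ω', mem_preimage, mem_ofPred_eq]
    constructor <;> intro <;> linarith
  have hG : ∀ z, IntegrableOn (fun w => v (z, w) * (starRingEnd ℂ) (g z)) (Prod.mk z ⁻¹' Ω') →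
      ∫ w in Prod.mk z ⁻¹' Ω', v (z, w) * (starRingEnd ℂ) (g z) = Ω.indicator (vol₁ • T) z := by
    intro z hz
    rw [hfiber] at hz ⊢
    by_cases hzΩ : z ∈ Ω
    · rw [indicator_of_mem hzΩ, setIntegral_setOf_sum_norm_sq_pow_lt hq.ne' (neg_pos.2 hzΩ)
        ((hv_hol z hzΩ).mul_const _) hz]
      simp only [T, Pi.smul_apply, Fintype.card_fin, Complex.real_smul]
      push_cast
      ring
    · rw [indicator_of_notMem hzΩ, setOf_sum_norm_sq_pow_lt_eq_empty q (by simpa [Ω] using hzΩ),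
        Measure.restrict_empty, integral_zero_measure]
  obtain ⟨hGint, hGeq⟩ := integrable_and_setIntegral_prod_eq (μ := volume) (ν := volume)
    (measurableSet_lt (by fun_prop) measurable_const) hint (ae_of_all _ hG)
  refine ⟨(integrable_smul_iff measureReal_setOf_sum_norm_sq_lt_one_pos.ne' T).1
    ((integrable_indicator_iff hΩ).1 hGint), ?_⟩
  rw [Measure.volume_eq_prod, hGeq, integral_indicator hΩ]
  simp only [Pi.smul_apply, integral_smul]
  rfl

/-- Orthogonality identity: if `v` is fiberwise holomorphic in `w` on
`Ω̃ = {(z,w) : ρ₀ z + |w|^{2q} < 0}`, `g` is measurable on `Ω`, and `(z,w) ↦ v(z,w)·conj(g z)`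
is integrable on `Ω̃`, then `z ↦ v(z,0)·conj(g z)·(−ρ₀ z)^{m/q}` is integrable on `Ω` and
`λ(B(0,1)) · ∫_Ω v(z,0)·conj(g z)·(−ρ₀ z)^{m/q} dλ(z) = ∫_{Ω̃} v·conj(g∘pr₁) dλ`.
Here `|w|` denotes the Euclidean norm, `|w|^{2q} = (∑ i, |w i|²)^q`. -/
theorem stmt_9 (n m q : ℕ) (hm : 0 < m) (hq : 0 < q)
    (ρ₀ : (Fin n → ℂ) → ℝ) (hρ₀ : Continuous ρ₀)
    (v : (Fin n → ℂ) × (Fin m → ℂ) → ℂ) (hv : Measurable v)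
    (hv_hol : ∀ z ∈ {z : Fin n → ℂ | ρ₀ z < 0},
      DifferentiableOn ℂ (fun w => v (z, w))
        {w : Fin m → ℂ | (∑ i, ‖w i‖ ^ 2) ^ q < -ρ₀ z})
    (g : (Fin n → ℂ) → ℂ) (hg : Measurable g)
    (hint : IntegrableOn (fun x => v x * (starRingEnd ℂ) (g x.1))
      {x : (Fin n → ℂ) × (Fin m → ℂ) | ρ₀ x.1 + (∑ i, ‖x.2 i‖ ^ 2) ^ q < 0}) :
    IntegrableOn
      (fun z => v (z, 0) * (starRingEnd ℂ) (g z) * (((-ρ₀ z) ^ ((m : ℝ) / (q : ℝ)) : ℝ) : ℂ))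
      {z : Fin n → ℂ | ρ₀ z < 0} ∧
    (volume {w : Fin m → ℂ | ∑ i, ‖w i‖ ^ 2 < 1}).toReal •
        ∫ z in {z : Fin n → ℂ | ρ₀ z < 0},
          v (z, 0) * (starRingEnd ℂ) (g z) * (((-ρ₀ z) ^ ((m : ℝ) / (q : ℝ)) : ℝ) : ℂ) =
      ∫ x in {x : (Fin n → ℂ) × (Fin m → ℂ) | ρ₀ x.1 + (∑ i, ‖x.2 i‖ ^ 2) ^ q < 0},
        v x * (starRingEnd ℂ) (g x.1) :=
  stmt_9_general n m q hq ρ₀ hρ₀ v hv_hol g hint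
end
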